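/- E_{M,θ}(α) ⊂ E_θ(α): for every y ∈ E_{M,θ}(α), lim_{n→∞} (L_{n,θ}(y)·log n·log log n)/(S_{n,θ}(y) − L_{n,θ}(y)) = α. -/

import Mathlib

open Filter Real

noncomputable section

/-- The generalized Gauss map `T_θ`. -/
def gaussMap (θ : ℝ) (x : ℝ) : ℝ := if x = 0 then 0 else 1 / x - θ * ⌊1 / (θ * x)⌋

/-- The `n`-th digit (1-indexed) of the θ-expansion of `x`: `ℓ_n(x) = ⌊1/(θ·T_θ^{n−1}(x))⌋`. -/
def digit (θ : ℝ) (x : ℝ) (n : ℕ) : ℤ := ⌊1 / (θ * (gaussMap θ)^[n - 1] x)⌋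

/-- `S_{n,θ}(x)`, the sum of the first `n` digits. -/
def Sdig (θ : ℝ) (x : ℝ) (n : ℕ) : ℤ := ∑ k ∈ Finset.Icc 1 n, digit θ x k

/-- `L_{n,θ}(x)`, the maximum of the first `n` digits. -/
def Ldig (θ : ℝ) (x : ℝ) (n : ℕ) : ℤ :=
  if h : 1 ≤ n then (Finset.Icc 1 n).sup' (Finset.nonempty_Icc.mpr h) (digit θ x) else 0

/-- The ratio `L_{n,θ}(x)·log n·log log n / (S_{n,θ}(x) − L_{n,θ}(x))`. -/
def ratioFun (θ : ℝ) (x : ℝ) (n : ℕ) : ℝ :=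
  ((Ldig θ x n : ℝ) * Real.log n * Real.log (Real.log n)) /
    ((Sdig θ x n : ℝ) - (Ldig θ x n : ℝ))

/-- The level set `E_θ(α)` of irrationals in `[0,θ]` where the ratio tends to `α`. -/
def Eset (θ α : ℝ) : Set ℝ :=
  {x | x ∈ Set.Icc 0 θ ∧ Irrational x ∧
    Tendsto (fun n => ratioFun θ x n) atTop (nhds α)}

/-- The sparse sequence `n_k = ⌊exp(k^{3/4})⌋`. -/
def sparseSeq (k : ℕ) : ℕ := ⌊Real.exp ((k : ℝ) ^ ((3 : ℝ) / 4))⌋₊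

/-- The technical conditions (A), (B), (C) on the cutoff `N0`, required to hold
for every `k ≥ N0`. -/
def N0Cond (α : ℝ) (m M : ℕ) (N0 : ℕ) : Prop :=
  ∀ k : ℕ, N0 ≤ k →
    (α * m * ((sparseSeq k : ℝ) - 1) /
        (Real.log (sparseSeq k) * Real.log (Real.log (sparseSeq k))) > (M : ℝ) + 1) ∧
    (Real.log (sparseSeq (k + 1)) * Real.log (Real.log (sparseSeq (k + 1))) -
        Real.log (sparseSeq k) * Real.log (Real.log (sparseSeq k)) < α / 2) ∧
    ((sparseSeq (k + 1) : ℝ) - (sparseSeq k : ℝ) <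
        (sparseSeq k : ℝ) / (k : ℝ) ^ ((1 : ℝ) / 8))

/-- `i` is one of the insertion positions `n_k`, `k ≥ N0`. -/
def insertedPos (N0 : ℕ) (i : ℕ) : Prop := ∃ k : ℕ, N0 ≤ k ∧ i = sparseSeq k

/-- The constructed set `E_{M,θ}(α)`: irrationals in `[0,θ]` whose digit at each
insertion position `n_k` (`k ≥ N0`) equals
`⌊α·(Σ_{i=1}^{n_k−1} ℓ_i(x)) / (log n_k · log log n_k)⌋`, and whose digits at all
other positions lie in `[m, M]`. -/
def EMset (θ α : ℝ) (m M N0 : ℕ) : Set ℝ :=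
  {x | x ∈ Set.Icc 0 θ ∧ Irrational x ∧
    (∀ k : ℕ, N0 ≤ k →
      digit θ x (sparseSeq k) =
        ⌊α * (∑ i ∈ Finset.Icc 1 (sparseSeq k - 1), (digit θ x i : ℝ)) /
          (Real.log (sparseSeq k) * Real.log (Real.log (sparseSeq k)))⌋) ∧
    (∀ i : ℕ, 1 ≤ i → ¬ insertedPos N0 i →
      (m : ℤ) ≤ digit θ x i ∧ digit θ x i ≤ (M : ℤ))}

/-! For `y ∈ E_{M,θ}(α)` every digit is at least `m`: by (A), an inserted digit `ℓ(n_k)` is at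
least `M + 1` as soon as the earlier digits are at least `m`. So the inserted digits dominate all
others, and by (B) they increase with `k`. Hence on the block `n_K ≤ n < n_{K+1}` the maximum
`L_n` is `ℓ(n_K) ≈ α S_{n_K - 1} / (log n_K log log n_K)`, while by (C) the digits after `n_K`
add only `O(K^{-1/8}) S_{n_K - 1}` to `S_n - L_n`. The resulting bounds on the ratio tend to `α`
as `K → ∞`. -/

open Finset Topology

lemma one_le_sparseSeq (k : ℕ) : 1 ≤ sparseSeq k :=
  Nat.le_floor (by exact_mod_cast Real.one_le_exp (Real.rpow_nonneg (Nat.cast_nonneg k) _))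

lemma sparseSeq_zero : sparseSeq 0 = 1 := by
  simp [sparseSeq]

lemma sparseSeq_monotone : Monotone sparseSeq := fun _ _ hab =>
  Nat.floor_le_floor (Real.exp_le_exp.2
    (Real.rpow_le_rpow (Nat.cast_nonneg _) (Nat.cast_le.2 hab) (by norm_num)))

lemma tendsto_sparseSeq_atTop : Tendsto sparseSeq atTop atTop :=
  tendsto_nat_floor_atTop.comp (Real.tendsto_exp_atTop.comp
    ((tendsto_rpow_atTop (by norm_num : (0 : ℝ) < 3 / 4)).comp tendsto_natCast_atTop_atTop))

lemma not_insertedPos_of_mem_Ioo {N0 K j : ℕ} (h : j ∈ Ioo (sparseSeq K) (sparseSeq (K + 1))) :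
    ¬ insertedPos N0 j := by
  rintro ⟨k, -, rfl⟩
  obtain ⟨hKk, hkK⟩ := mem_Ioo.1 h
  rcases le_or_gt k K with hk | hk
  · exact (sparseSeq_monotone hk).not_gt hKk
  · exact (sparseSeq_monotone hk).not_gt hkK

lemma exists_lt_sparseSeq_succ (n : ℕ) : ∃ K, n < sparseSeq (K + 1) :=
  ((tendsto_sparseSeq_atTop.comp (tendsto_add_atTop_nat 1)).eventually_gt_atTop n).exists

def blockIndex (n : ℕ) : ℕ := Nat.find (exists_lt_sparseSeq_succ n)

lemma lt_sparseSeq_blockIndex_succ (n : ℕ) : n < sparseSeq (blockIndex n + 1) :=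
  Nat.find_spec (exists_lt_sparseSeq_succ n)

lemma sparseSeq_blockIndex_le {n : ℕ} (hn : 1 ≤ n) : sparseSeq (blockIndex n) ≤ n := by
  rcases hK : blockIndex n with _ | K
  · rwa [sparseSeq_zero]
  · exact not_lt.1 (Nat.find_min (exists_lt_sparseSeq_succ n) (show K < blockIndex n by omega))

lemma tendsto_blockIndex : Tendsto blockIndex atTop atTop := by
  refine tendsto_atTop.2 fun K => (eventually_ge_atTop (sparseSeq K)).mono fun n hn => ?_
  by_contra! h
  exact (sparseSeq_monotone h).not_gt ((lt_sparseSeq_blockIndex_succ n).trans_le' hn)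

def logMulLogLog (x : ℝ) : ℝ := log x * log (log x)

lemma logMulLogLog_le_logMulLogLog {x y : ℝ} (hx : 1 ≤ x) (hpos : 0 < logMulLogLog x)
    (hxy : x ≤ y) : logMulLogLog x ≤ logMulLogLog y := by
  have hlog : 0 < log x := (log_nonneg hx).lt_of_ne fun h => by
    simp [logMulLogLog, ← h] at hpos
  have hloglog : 0 < log (log x) := pos_of_mul_pos_right hpos hlog.le
  have hlogle : log x ≤ log y := log_le_log (by linarith) hxy
  exact mul_le_mul hlogle (log_le_log hlog hlogle) hloglog.le (hlog.trans_le hlogle).le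

lemma tendsto_logMulLogLog_atTop : Tendsto logMulLogLog atTop atTop :=
  tendsto_log_atTop.atTop_mul_atTop₀ (tendsto_log_atTop.comp tendsto_log_atTop)

lemma tendsto_logMulLogLog_div_atTop {c : ℝ} (hc : 0 < c) :
    Tendsto (fun x => logMulLogLog x / (c * (x - 1))) atTop (𝓝 0) := by
  refine tendsto_of_tendsto_of_tendsto_of_le_of_le' tendsto_const_nhds
    (tendsto_pow_log_div_mul_add_atTop c (-c) 2 hc.ne') ?_ ?_
  all_goals filter_upwards [eventually_ge_atTop (exp 1)] with x hx
  all_goals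
    have hlog : 1 ≤ log x := (le_log_iff_exp_le (by linarith [exp_pos 1])).2 hx
    have hden : 0 < c * (x - 1) := mul_pos hc (by linarith [add_one_le_exp 1])
    have hloglog : 0 ≤ log (log x) := log_nonneg hlog
  · exact div_nonneg (mul_nonneg (by linarith) hloglog) hden.le
  · rw [show c * x + -c = c * (x - 1) by ring, sq]
    exact div_le_div_of_nonneg_right
      (mul_le_mul_of_nonneg_left (log_le_self (by linarith)) (by linarith)) hden.le

section Digits

variable {θ x : ℝ}

lemma Sdig_add_sum_Ioc {a b : ℕ} (hab : a ≤ b) :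
    Sdig θ x a + ∑ j ∈ Ioc a b, digit θ x j = Sdig θ x b := by
  have hIcc : ∀ n : ℕ, Icc 1 n = Ioc 0 n := Icc_add_one_left_eq_Ioc 0
  simp only [Sdig, hIcc]
  exact sum_Ioc_consecutive _ (Nat.zero_le a) hab

lemma Sdig_sub_one_add {n : ℕ} (hn : 1 ≤ n) :
    Sdig θ x (n - 1) + digit θ x n = Sdig θ x n := by
  obtain ⟨n, rfl⟩ := Nat.exists_eq_add_of_le' hn
  simp only [Sdig, Nat.add_sub_cancel, sum_Icc_succ_top (Nat.le_add_left 1 n)]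

lemma mul_le_Sdig {c n : ℕ} (h : ∀ j ∈ Icc 1 n, (c : ℤ) ≤ digit θ x j) :
    (c * n : ℝ) ≤ Sdig θ x n := by
  have := card_nsmul_le_sum _ _ _ h
  rw [Nat.card_Icc, Nat.add_sub_cancel, nsmul_eq_mul] at this
  rw [Sdig]
  exact_mod_cast this.trans_eq' (mul_comm _ _)

lemma Ldig_eq_of_forall_le {n j : ℕ} (hj : j ∈ Icc 1 n)
    (h : ∀ i ∈ Icc 1 n, digit θ x i ≤ digit θ x j) : Ldig θ x n = digit θ x j := by
  have hn : 1 ≤ n := (mem_Icc.1 hj).1.trans (mem_Icc.1 hj).2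
  rw [Ldig, dif_pos hn]
  exact le_antisymm (sup'_le _ _ h) (le_sup' _ hj)

end Digits

lemma mul_div_le_mul_one_add_div {α S L d D T : ℝ} (hα : 0 < α) (hd : 0 < d) (hS : 0 < S)
    (hLS : L ≤ α * S / d) (hD0 : 0 ≤ D) (hD : D ≤ d + α / 2) (hST : S ≤ T) :
    L * D / T ≤ α * (1 + α / (2 * d)) := by
  rw [div_le_iff₀ (hS.trans_le hST)]
  calc L * D ≤ α * S / d * (d + α / 2) := mul_le_mul hLS hD hD0 (by positivity)
    _ = α * (1 + α / (2 * d)) * S := by field_simp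
    _ ≤ α * (1 + α / (2 * d)) * T := mul_le_mul_of_nonneg_left hST (by positivity)

lemma sub_div_div_one_add_le_mul_div {α S L d D T s δ : ℝ} (hd : 0 < d) (hs : 0 < s)
    (hsS : s ≤ S) (hδ : 0 ≤ δ) (hdS : d ≤ α * S) (hL : α * S / d - 1 < L) (hdD : d ≤ D)
    (hT : 0 < T) (hTS : T ≤ S * (1 + δ)) :
    (α - d / s) / (1 + δ) ≤ L * D / T := by
  have hS : 0 < S := hs.trans_le hsS
  have hLd : α * S - d ≤ L * d := by
    have := mul_lt_mul_of_pos_right hL hd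
    rw [sub_mul, div_mul_cancel₀ _ hd.ne', one_mul] at this
    exact this.le
  have hL0 : 0 ≤ L := nonneg_of_mul_nonneg_left (by linarith) hd
  calc (α - d / s) / (1 + δ) ≤ (α - d / S) / (1 + δ) := by gcongr
    _ = (α * S - d) / (S * (1 + δ)) := by field_simp
    _ ≤ (α * S - d) / T := div_le_div_of_nonneg_left (sub_nonneg.2 hdS) hT hTS
    _ ≤ L * d / T := by gcongr
    _ ≤ L * D / T := by gcongr

section Construction

variable {θ α y : ℝ} {m M N0 k : ℕ}

lemma N0Cond.logMulLogLog_pos (hα : 0 < α) (hN0 : N0Cond α m M N0) (hk : N0 ≤ k) :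
    0 < logMulLogLog (sparseSeq k) := by
  have hA : (M + 1 : ℝ) < α * m * ((sparseSeq k : ℝ) - 1) / logMulLogLog (sparseSeq k) :=
    (hN0 k hk).1
  have hnum : 0 ≤ α * m * ((sparseSeq k : ℝ) - 1) :=
    mul_nonneg (by positivity) (sub_nonneg.2 (by exact_mod_cast one_le_sparseSeq k))
  by_contra! h
  linarith [div_nonpos_of_nonneg_of_nonpos hnum h]

lemma N0Cond.add_one_mul_lt (hα : 0 < α) (hN0 : N0Cond α m M N0) (hk : N0 ≤ k) {S : ℝ}
    (hS : m * ((sparseSeq k : ℝ) - 1) ≤ S) :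
    (M + 1) * logMulLogLog (sparseSeq k) < α * S := by
  have hA : (M + 1 : ℝ) < α * m * ((sparseSeq k : ℝ) - 1) / logMulLogLog (sparseSeq k) :=
    (hN0 k hk).1
  rw [lt_div_iff₀ (hN0.logMulLogLog_pos hα hk)] at hA
  nlinarith

lemma two_le_sparseSeq_of_logMulLogLog_pos (h : 0 < logMulLogLog (sparseSeq k)) :
    2 ≤ sparseSeq k := by
  by_contra! h2
  have : sparseSeq k = 1 := le_antisymm (by omega) (one_le_sparseSeq k)
  simp [logMulLogLog, this] at h

lemma N0Cond.logMulLogLog_mem_Icc {K n : ℕ} (hα : 0 < α)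
    (hN0 : N0Cond α m M N0) (hK : N0 ≤ K) (hKn : sparseSeq K ≤ n)
    (hnK : n ≤ sparseSeq (K + 1)) :
    logMulLogLog n ∈
      Set.Icc (logMulLogLog (sparseSeq K)) (logMulLogLog (sparseSeq K) + α / 2) := by
  have hK1 : (1 : ℝ) ≤ sparseSeq K := by exact_mod_cast one_le_sparseSeq K
  have hd := hN0.logMulLogLog_pos hα hK
  have hD := logMulLogLog_le_logMulLogLog hK1 hd (by exact_mod_cast hKn : (sparseSeq K : ℝ) ≤ n)
  have hB : logMulLogLog (sparseSeq (K + 1)) - logMulLogLog (sparseSeq K) < α / 2 :=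
    (hN0 K hK).2.1
  have := logMulLogLog_le_logMulLogLog (hK1.trans (by exact_mod_cast hKn)) (hd.trans_le hD)
    (by exact_mod_cast hnK : (n : ℝ) ≤ sparseSeq (K + 1))
  exact ⟨hD, by linarith⟩

lemma EMset.digit_sparseSeq_eq (hy : y ∈ EMset θ α m M N0) (hk : N0 ≤ k) :
    digit θ y (sparseSeq k) =
      ⌊α * Sdig θ y (sparseSeq k - 1) / logMulLogLog (sparseSeq k)⌋ := by
  rw [hy.2.2.1 k hk, Sdig]
  push_cast
  rfl

lemma EMset.add_one_le_digit_of_le_digit (hα : 0 < α) (hN0 : N0Cond α m M N0)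
    (hy : y ∈ EMset θ α m M N0) (hk : N0 ≤ k)
    (h : ∀ j ∈ Icc 1 (sparseSeq k - 1), (m : ℤ) ≤ digit θ y j) :
    (M : ℤ) + 1 ≤ digit θ y (sparseSeq k) := by
  have hS := mul_le_Sdig h
  rw [Nat.cast_pred (one_le_sparseSeq k)] at hS
  rw [EMset.digit_sparseSeq_eq hy hk, Int.le_floor,
    le_div_iff₀ (hN0.logMulLogLog_pos hα hk)]
  push_cast
  exact (hN0.add_one_mul_lt hα hk hS).le

lemma EMset.le_digit (hα : 0 < α) (hmM : m ≤ M + 1) (hN0 : N0Cond α m M N0)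
    (hy : y ∈ EMset θ α m M N0) {i : ℕ} (hi : 1 ≤ i) : (m : ℤ) ≤ digit θ y i := by
  induction i using Nat.strong_induction_on with
  | _ i ih =>
    by_cases hins : insertedPos N0 i
    · obtain ⟨k, hk, rfl⟩ := hins
      have := EMset.add_one_le_digit_of_le_digit hα hN0 hy hk fun j hj =>
        ih j (by have := (mem_Icc.1 hj).2; omega) (mem_Icc.1 hj).1
      omega
    · exact (hy.2.2.2 i hi hins).1

lemma EMset.add_one_le_digit_sparseSeq (hα : 0 < α) (hmM : m ≤ M + 1) (hN0 : N0Cond α m M N0)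
    (hy : y ∈ EMset θ α m M N0) (hk : N0 ≤ k) : (M : ℤ) + 1 ≤ digit θ y (sparseSeq k) :=
  EMset.add_one_le_digit_of_le_digit hα hN0 hy hk fun _ hj =>
    EMset.le_digit hα hmM hN0 hy (mem_Icc.1 hj).1

lemma EMset.mul_le_Sdig_sparseSeq (hα : 0 < α) (hmM : m ≤ M + 1) (hN0 : N0Cond α m M N0)
    (hy : y ∈ EMset θ α m M N0) (k : ℕ) :
    m * ((sparseSeq k : ℝ) - 1) ≤ Sdig θ y (sparseSeq k - 1) := by
  rw [← Nat.cast_pred (one_le_sparseSeq k)]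
  exact mul_le_Sdig fun _ hj => EMset.le_digit hα hmM hN0 hy (mem_Icc.1 hj).1

end Construction

section Block

variable {θ α y : ℝ} {m M N0 k K n : ℕ}

lemma EMset.digit_sparseSeq_le_succ (hα : 0 < α) (hmM : m ≤ M + 1) (hM : 1 ≤ M)
    (hN0 : N0Cond α m M N0) (hy : y ∈ EMset θ α m M N0) (hk : N0 ≤ k) :
    digit θ y (sparseSeq k) ≤ digit θ y (sparseSeq (k + 1)) := by
  rcases (sparseSeq_monotone k.le_succ).eq_or_lt with heq | hlt
  · rw [← heq]
  have hk' : N0 ≤ k + 1 := hk.trans k.le_succ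
  have hSS' : Sdig θ y (sparseSeq k - 1) + digit θ y (sparseSeq k) ≤
      Sdig θ y (sparseSeq (k + 1) - 1) := by
    have hgap : 0 ≤ ∑ j ∈ Ioc (sparseSeq k) (sparseSeq (k + 1) - 1), digit θ y j :=
      sum_nonneg fun j hj => (Int.natCast_nonneg m).trans
        (EMset.le_digit hα hmM hN0 hy (by have := (mem_Ioc.1 hj).1; omega))
    rw [← Sdig_add_sum_Ioc (Nat.le_sub_one_of_lt hlt), Sdig_sub_one_add (one_le_sparseSeq k)]
    exact le_add_of_nonneg_right hgap
  replace hSS' : (Sdig θ y (sparseSeq k - 1) : ℝ) + digit θ y (sparseSeq k) ≤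
      Sdig θ y (sparseSeq (k + 1) - 1) := by exact_mod_cast hSS'
  set S : ℝ := ↑(Sdig θ y (sparseSeq k - 1))
  set S' : ℝ := ↑(Sdig θ y (sparseSeq (k + 1) - 1))
  set L : ℝ := ↑(digit θ y (sparseSeq k))
  set d := logMulLogLog (sparseSeq k)
  set d' := logMulLogLog (sparseSeq (k + 1))
  have hd : 0 < d := hN0.logMulLogLog_pos hα hk
  have hd' : 0 < d' := hN0.logMulLogLog_pos hα hk'
  have hB : d' - d < α / 2 := (hN0 k hk).2.1
  have hA := hN0.add_one_mul_lt hα hk (EMset.mul_le_Sdig_sparseSeq hα hmM hN0 hy k)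
  have hL : α * S < (L + 1) * d := by
    have := Int.lt_floor_add_one (α * S / d)
    rwa [← EMset.digit_sparseSeq_eq hy hk, div_lt_iff₀ hd] at this
  rw [EMset.digit_sparseSeq_eq hy hk, EMset.digit_sparseSeq_eq hy hk']
  refine Int.floor_le_floor ((div_le_div_iff₀ hd hd').2 ?_)
  -- `α S ≥ 2 d` by (A), so the growth `d' - d < α / 2` is absorbed by the new digit
  -- `L ≥ α S / d - 1`
  have hM' : (2 : ℝ) ≤ M + 1 := by exact_mod_cast Nat.succ_le_succ hM
  nlinarith [mul_le_mul_of_nonneg_left hSS' (mul_pos hα hd).le,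
    mul_le_mul_of_nonneg_left hB.le (show 0 ≤ α * S by nlinarith),
    mul_le_mul_of_nonneg_right hM' hd.le]

lemma EMset.digit_sparseSeq_le (hα : 0 < α) (hmM : m ≤ M + 1) (hM : 1 ≤ M)
    (hN0 : N0Cond α m M N0) (hy : y ∈ EMset θ α m M N0) (hk : N0 ≤ k) (hkK : k ≤ K) :
    digit θ y (sparseSeq k) ≤ digit θ y (sparseSeq K) := by
  induction K, hkK using Nat.le_induction with
  | base => exact le_rfl
  | succ K hkK ih =>
    exact ih.trans (EMset.digit_sparseSeq_le_succ hα hmM hM hN0 hy (hk.trans hkK))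

lemma EMset.Ldig_eq (hα : 0 < α) (hmM : m ≤ M + 1) (hM : 1 ≤ M) (hN0 : N0Cond α m M N0)
    (hy : y ∈ EMset θ α m M N0) (hK : N0 ≤ K) (hKn : sparseSeq K ≤ n)
    (hnK : n < sparseSeq (K + 1)) : Ldig θ y n = digit θ y (sparseSeq K) := by
  refine Ldig_eq_of_forall_le (mem_Icc.2 ⟨one_le_sparseSeq K, hKn⟩) fun j hj => ?_
  by_cases hins : insertedPos N0 j
  · obtain ⟨k, hk, rfl⟩ := hins
    have hkK : k ≤ K := by
      by_contra! h
      exact (sparseSeq_monotone h).not_gt ((mem_Icc.1 hj).2.trans_lt hnK)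
    exact EMset.digit_sparseSeq_le hα hmM hM hN0 hy hk hkK
  · have := (hy.2.2.2 j (mem_Icc.1 hj).1 hins).2
    have := EMset.add_one_le_digit_sparseSeq hα hmM hN0 hy hK
    omega

lemma EMset.sum_Ioc_digit_le (hm : 0 < m) (hα : 0 < α) (hmM : m ≤ M + 1)
    (hN0 : N0Cond α m M N0) (hy : y ∈ EMset θ α m M N0) (hK : N0 ≤ K)
    (hKn : sparseSeq K ≤ n) (hnK : n < sparseSeq (K + 1)) :
    ∑ j ∈ Ioc (sparseSeq K) n, (digit θ y j : ℝ) ≤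
      2 * M / (m * (K : ℝ) ^ (1 / 8 : ℝ)) * Sdig θ y (sparseSeq K - 1) := by
  set t : ℝ := (K : ℝ) ^ (1 / 8 : ℝ)
  have hsum :
      ∑ j ∈ Ioc (sparseSeq K) n, (digit θ y j : ℝ) ≤ M * ((n : ℝ) - sparseSeq K) := by
    have := sum_le_card_nsmul (Ioc (sparseSeq K) n) (fun j => (digit θ y j : ℝ)) M
      fun j hj => by
        obtain ⟨hKj, hjn⟩ := mem_Ioc.1 hj
        exact_mod_cast (hy.2.2.2 j (by omega)
          (not_insertedPos_of_mem_Ioo (mem_Ioo.2 ⟨hKj, hjn.trans_lt hnK⟩))).2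
    rwa [Nat.card_Ioc, nsmul_eq_mul, Nat.cast_sub hKn, mul_comm] at this
  have hC : (n : ℝ) - sparseSeq K < sparseSeq K / t := by
    have := (hN0 K hK).2.2
    have : (n : ℝ) < sparseSeq (K + 1) := by exact_mod_cast hnK
    linarith
  have hKn' : (sparseSeq K : ℝ) ≤ n := by exact_mod_cast hKn
  have ht : 0 < t := by
    refine (show 0 ≤ t by positivity).lt_of_ne fun h => ?_
    rw [← h, div_zero] at hC
    linarith
  have h2 : (2 : ℝ) ≤ sparseSeq K := by
    exact_mod_cast two_le_sparseSeq_of_logMulLogLog_pos (hN0.logMulLogLog_pos hα hK)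
  calc ∑ j ∈ Ioc (sparseSeq K) n, (digit θ y j : ℝ) ≤ M * ((n : ℝ) - sparseSeq K) := hsum
    _ ≤ M * (sparseSeq K / t) := mul_le_mul_of_nonneg_left hC.le (Nat.cast_nonneg M)
    _ ≤ M * (2 * ((sparseSeq K : ℝ) - 1) / t) := by gcongr; linarith
    _ = 2 * M / (m * t) * (m * ((sparseSeq K : ℝ) - 1)) := by field_simp
    _ ≤ 2 * M / (m * t) * Sdig θ y (sparseSeq K - 1) :=
      mul_le_mul_of_nonneg_left (EMset.mul_le_Sdig_sparseSeq hα hmM hN0 hy K) (by positivity)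

end Block

/- Bounds for the ratio on the block `n_K ≤ n < n_{K+1}`: condition (B) gives the correction in
`ratioUpper`, condition (C) the denominator of `ratioLower`. -/
def ratioUpper (α : ℝ) (K : ℕ) : ℝ := α * (1 + α / (2 * logMulLogLog (sparseSeq K)))

def ratioLower (α : ℝ) (m M K : ℕ) : ℝ :=
  (α - logMulLogLog (sparseSeq K) / (m * ((sparseSeq K : ℝ) - 1))) /
    (1 + 2 * M / (m * (K : ℝ) ^ (1 / 8 : ℝ)))

lemma tendsto_ratioUpper (α : ℝ) : Tendsto (ratioUpper α) atTop (𝓝 α) := by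
  have h : Tendsto (fun K => 2 * logMulLogLog (sparseSeq K)) atTop atTop :=
    (tendsto_logMulLogLog_atTop.comp
      (tendsto_natCast_atTop_atTop.comp tendsto_sparseSeq_atTop)).const_mul_atTop two_pos
  have := ((tendsto_const_nhds (x := α)).div_atTop h |>.const_add 1).const_mul α
  rwa [add_zero, mul_one] at this

lemma tendsto_ratioLower {m : ℕ} (hm : 0 < m) (α : ℝ) (M : ℕ) :
    Tendsto (ratioLower α m M) atTop (𝓝 α) := by
  have h₁ : Tendsto (fun K => logMulLogLog (sparseSeq K) / (m * ((sparseSeq K : ℝ) - 1)))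
      atTop (𝓝 0) :=
    (tendsto_logMulLogLog_div_atTop (by positivity)).comp
      (tendsto_natCast_atTop_atTop.comp tendsto_sparseSeq_atTop)
  have h₂ :
      Tendsto (fun K : ℕ => 2 * (M : ℝ) / (m * (K : ℝ) ^ (1 / 8 : ℝ))) atTop (𝓝 0) :=
    tendsto_const_nhds.div_atTop (((tendsto_rpow_atTop (by norm_num)).comp
      tendsto_natCast_atTop_atTop).const_mul_atTop (by positivity))
  have := ((tendsto_const_nhds (x := α)).sub h₁).div (tendsto_const_nhds.add h₂)
    (by norm_num : (1 : ℝ) + 0 ≠ 0)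
  rwa [sub_zero, add_zero, div_one] at this

lemma EMset.ratioFun_mem_Icc {θ α y : ℝ} {m M N0 n : ℕ} (hm : 0 < m) (hα : 0 < α)
    (hmM : m ≤ M + 1) (hM : 1 ≤ M) (hN0 : N0Cond α m M N0) (hy : y ∈ EMset θ α m M N0)
    (hn : 1 ≤ n) (hK : N0 ≤ blockIndex n) :
    ratioFun θ y n ∈
      Set.Icc (ratioLower α m M (blockIndex n)) (ratioUpper α (blockIndex n)) := by
  set K := blockIndex n
  have hKn : sparseSeq K ≤ n := sparseSeq_blockIndex_le hn
  have hnK : n < sparseSeq (K + 1) := lt_sparseSeq_blockIndex_succ n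
  have hd := hN0.logMulLogLog_pos hα hK
  have hS := EMset.mul_le_Sdig_sparseSeq hα hmM hN0 hy K
  have hA := hN0.add_one_mul_lt hα hK hS
  have hR := EMset.sum_Ioc_digit_le hm hα hmM hN0 hy hK hKn hnK
  have hR0 : 0 ≤ ∑ j ∈ Ioc (sparseSeq K) n, (digit θ y j : ℝ) :=
    sum_nonneg fun j hj => by
      exact_mod_cast (Int.natCast_nonneg m).trans
        (EMset.le_digit hα hmM hN0 hy (by have := (mem_Ioc.1 hj).1; omega))
  have hratio : ratioFun θ y n = (digit θ y (sparseSeq K) : ℝ) * logMulLogLog n /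
      (Sdig θ y (sparseSeq K - 1) + ∑ j ∈ Ioc (sparseSeq K) n, (digit θ y j : ℝ)) := by
    rw [ratioFun, EMset.Ldig_eq hα hmM hM hN0 hy hK hKn hnK, ← Sdig_add_sum_Ioc hKn,
      ← Sdig_sub_one_add (one_le_sparseSeq K), logMulLogLog]
    push_cast
    ring
  obtain ⟨hD, hD'⟩ := hN0.logMulLogLog_mem_Icc hα hK hKn hnK.le
  set q : ℝ := α * Sdig θ y (sparseSeq K - 1) / logMulLogLog (sparseSeq K)
  have hfloor := Int.floor_le q
  have hfloor' := Int.sub_one_lt_floor q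
  rw [← EMset.digit_sparseSeq_eq hy hK] at hfloor hfloor'
  have h2 : (2 : ℝ) ≤ sparseSeq K := by exact_mod_cast two_le_sparseSeq_of_logMulLogLog_pos hd
  have hs : 0 < m * ((sparseSeq K : ℝ) - 1) := mul_pos (by exact_mod_cast hm) (by linarith)
  rw [hratio]
  constructor
  · exact sub_div_div_one_add_le_mul_div hd hs hS (by positivity) (by nlinarith) hfloor' hD
      (by linarith) (by linarith)
  · exact mul_div_le_mul_one_add_div hα hd (hs.trans_le hS) hfloor (hd.le.trans hD) hD'
      (by linarith)

theorem EMset_subset_levelSet_general (θ : ℝ) (m : ℕ) (hm : 0 < m)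
    (α : ℝ) (hα : 0 < α) (M : ℕ) (hM : 2 * m + 1 < M)
    (N0 : ℕ) (hN0 : N0Cond α m M N0)
    (y : ℝ) (hy : y ∈ EMset θ α m M N0) :
    Tendsto (fun n => ratioFun θ y n) atTop (nhds α) := by
  have hbounds : ∀ᶠ n in atTop, ratioFun θ y n ∈
      Set.Icc (ratioLower α m M (blockIndex n)) (ratioUpper α (blockIndex n)) :=
    ((eventually_ge_atTop 1).and (tendsto_blockIndex.eventually_ge_atTop N0)).mono fun _ hn =>
      EMset.ratioFun_mem_Icc hm hα (by omega) (by omega) hN0 hy hn.1 hn.2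
  exact tendsto_of_tendsto_of_tendsto_of_le_of_le'
    ((tendsto_ratioLower hm α M).comp tendsto_blockIndex)
    ((tendsto_ratioUpper α).comp tendsto_blockIndex)
    (hbounds.mono fun _ h => h.1) (hbounds.mono fun _ h => h.2)

/-- `E_{M,θ}(α) ⊂ E_θ(α)`: for every `y ∈ E_{M,θ}(α)` the ratio
`L_{n,θ}(y)·log n·log log n / (S_{n,θ}(y) − L_{n,θ}(y))` tends to `α`. -/
theorem EMset_subset_levelSet (θ : ℝ) (m : ℕ) (hm : 0 < m) (hmns : ¬ IsSquare m)
    (hθ : θ ∈ Set.Ioo (0 : ℝ) 1) (hθirr : Irrational θ) (hθ2 : θ ^ 2 = 1 / m)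
    (α : ℝ) (hα : 0 < α) (M : ℕ) (hM : 2 * m + 1 < M)
    (N0 : ℕ) (hN0 : N0Cond α m M N0)
    (y : ℝ) (hy : y ∈ EMset θ α m M N0) :
    Tendsto (fun n => ratioFun θ y n) atTop (nhds α) :=
  EMset_subset_levelSet_general θ m hm α hα M hM N0 hN0 y hy
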